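/- If $j_1,\dots,j_k \in \{1,\dots,r\}$ are pairwise distinct indices such that the corresponding facets of $P$ have empty intersection, $F_{j_1} \cap \dots \cap F_{j_k} = \emptyset$, then the mixed partial derivative $\frac{\partial}{\partial h_{j_1}} \cdots \frac{\partial}{\partial h_{j_k}}\, q_f$ is the zero polynomial; equivalently the mixed derivative of $h \mapsto \int_{P(h)} f\, d\lambda$ in the directions $h_{j_1},\dots,h_{j_k}$ vanishes identically near $h = 0$. -/

import Mathlib

open MeasureTheory

noncomputable section

/-- Cast a lattice vector to a real vector. -/
def castZ {n : ℕ} (x : Fin n → ℤ) : Fin n → ℝ := fun i => (x i : ℝ)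

/-- The pairing `⟨m, u⟩ = ∑ i, m i * u i` of a real vector with a lattice vector. -/
def pairR {n : ℕ} (m : Fin n → ℝ) (u : Fin n → ℤ) : ℝ := ∑ i, m i * (u i : ℝ)

/-- The polytope `P = {m : ⟨m, uⱼ⟩ + cⱼ ≥ 0 for all j}`. -/
def Pset {n r : ℕ} (u : Fin r → Fin n → ℤ) (c : Fin r → ℤ) : Set (Fin n → ℝ) :=
  {m | ∀ j, 0 ≤ pairR m (u j) + (c j : ℝ)}

/-- The dilated polytope `P(h) = {m : ⟨m, uⱼ⟩ + cⱼ + hⱼ ≥ 0 for all j}`. -/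
def Ph {n r : ℕ} (u : Fin r → Fin n → ℤ) (c : Fin r → ℤ) (h : Fin r → ℝ) :
    Set (Fin n → ℝ) :=
  {m | ∀ j, 0 ≤ pairR m (u j) + (c j : ℝ) + h j}

/-- The `j`-th facet `Fⱼ = {m ∈ P : ⟨m, uⱼ⟩ + cⱼ = 0}` of `P`. -/
def Fface {n r : ℕ} (u : Fin r → Fin n → ℤ) (c : Fin r → ℤ) (j : Fin r) :
    Set (Fin n → ℝ) :=
  {m | m ∈ Pset u c ∧ pairR m (u j) + (c j : ℝ) = 0}

/-- The iterated partial derivative `∂^α` of a polynomial, for a multi-index `α`. -/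
def pderivMulti {r : ℕ} (α : Fin r → ℕ) (q : MvPolynomial (Fin r) ℝ) :
    MvPolynomial (Fin r) ℝ :=
  (List.finRange r).foldl (fun p j => (fun p' => MvPolynomial.pderiv j p')^[α j] p) q

/-!
Write `t_S` for `t` with the coordinates outside `S` set to zero. For small `h` and `t ≥ 0`, the
alternating sum `∑_{S ⊆ J} (-1)^|S| 1_{P(h + t_S)}(m)` vanishes at every point `m`: if `m` is far
outside `P` every term is zero, and otherwise, since `⋂_{j ∈ J} F_j = ∅`, compactness gives some
`j ∈ J` whose constraint `m` satisfies with room to spare, so that the terms for `S` and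
`insert j S` cancel. Integrating `f`, the polynomial `∑_{S ⊆ J} (-1)^|S| q(h + t_S)` in `(h, t)`
vanishes on a box, hence identically; differentiating once in each `t_j`, `j ∈ J`, leaves
`± (∂_J q)(h + t_J) = 0`.
-/

namespace MvPolynomial

variable {R σ : Type*} [CommRing R]

def iteratedPderiv (l : List σ) : MvPolynomial σ R →ₗ[R] MvPolynomial σ R :=
  l.foldr (fun j D => D ∘ₗ (pderiv j).toLinearMap) LinearMap.id

theorem iteratedPderiv_nil (p : MvPolynomial σ R) : iteratedPderiv [] p = p := rfl

theorem iteratedPderiv_cons (j : σ) (l : List σ) (p : MvPolynomial σ R) :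
    iteratedPderiv (j :: l) p = iteratedPderiv l (pderiv j p) := rfl

theorem foldl_iterate_pderiv_indicator [DecidableEq σ] (J : Finset σ) (l : List σ)
    (p : MvPolynomial σ R) :
    l.foldl (fun p j => (fun p' => pderiv j p')^[if j ∈ J then 1 else 0] p) p
      = iteratedPderiv (l.filter (· ∈ J)) p := by
  induction l generalizing p with
  | nil => rfl
  | cons j l ih =>
    by_cases hj : j ∈ J <;> simp [hj, ih, iteratedPderiv_cons]

/-- `bind₁ (shiftBy S) p` is `p(h + t_S)` in the variables `h = X ∘ inl`, `t = X ∘ inr`, where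
`t_S` is `t` with the coordinates outside `S` set to zero. -/
def shiftBy [DecidableEq σ] (S : Finset σ) (j : σ) : MvPolynomial (σ ⊕ σ) R :=
  X (Sum.inl j) + if j ∈ S then X (Sum.inr j) else 0

variable [DecidableEq σ]

theorem eval_bind₁_shiftBy (S : Finset σ) (x : σ ⊕ σ → R) (p : MvPolynomial σ R) :
    eval x (bind₁ (shiftBy S) p)
      = eval (fun j => x (Sum.inl j) + if j ∈ S then x (Sum.inr j) else 0) p := by
  simp only [eval, eval₂Hom_bind₁]
  congr 2
  funext j
  by_cases hj : j ∈ S <;> simp [shiftBy, hj]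

theorem pderiv_inr_shiftBy (S : Finset σ) (i j : σ) :
    pderiv (Sum.inr j) (shiftBy S i : MvPolynomial (σ ⊕ σ) R)
      = if i = j ∧ i ∈ S then 1 else 0 := by
  rcases eq_or_ne i j with rfl | hij
  · by_cases hiS : i ∈ S <;> simp [shiftBy, hiS]
  · by_cases hiS : i ∈ S <;> simp [shiftBy, pderiv_X, hiS, hij]

theorem pderiv_inr_bind₁_shiftBy (S : Finset σ) (j : σ) (p : MvPolynomial σ R) :
    pderiv (Sum.inr j) (bind₁ (shiftBy S) p)
      = if j ∈ S then bind₁ (shiftBy S) (pderiv j p) else 0 := by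
  induction p using MvPolynomial.induction_on with
  | C a => simp
  | add p q hp hq => rw [map_add, map_add, hp, hq]; split_ifs <;> simp
  | mul_X p i hp =>
    rw [map_mul, bind₁_X_right, pderiv_mul, hp, pderiv_inr_shiftBy, pderiv_mul]
    by_cases hjS : j ∈ S <;> rcases eq_or_ne i j with rfl | hij <;> simp [*]

theorem iteratedPderiv_map_inr_bind₁_shiftBy (S : Finset σ) (l : List σ)
    (p : MvPolynomial σ R) :
    iteratedPderiv (l.map Sum.inr) (bind₁ (shiftBy S) p)
      = if ∀ j ∈ l, j ∈ S then bind₁ (shiftBy S) (iteratedPderiv l p) else 0 := by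
  induction l generalizing p with
  | nil => simp [iteratedPderiv_nil]
  | cons j l ih =>
    rw [List.map_cons, iteratedPderiv_cons, pderiv_inr_bind₁_shiftBy, iteratedPderiv_cons]
    by_cases hjS : j ∈ S
    · simp [hjS, ih]
    · simp [hjS]

theorem bind₁_sumElim_X_zero_bind₁_shiftBy (S : Finset σ) (p : MvPolynomial σ R) :
    bind₁ (Sum.elim X 0) (bind₁ (shiftBy S) p) = p := by
  rw [bind₁_bind₁]
  conv_rhs => rw [← AlgHom.id_apply (R := R) p, ← bind₁_X_left]
  congr 2
  funext j
  simp [shiftBy, apply_ite]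

theorem bind₁_shiftBy_injective (S : Finset σ) :
    Function.Injective (bind₁ (shiftBy S) : MvPolynomial σ R → MvPolynomial (σ ⊕ σ) R) :=
  Function.LeftInverse.injective (bind₁_sumElim_X_zero_bind₁_shiftBy S)

/-- Differentiating once in each `t_j`, `j ∈ J`, kills every term but `S = J`. -/
theorem iteratedPderiv_eq_zero_of_sum_shiftBy_eq_zero (J : Finset σ) {l : List σ}
    (hl : ∀ j, j ∈ l ↔ j ∈ J) (p : MvPolynomial σ R)
    (hp : ∑ S ∈ J.powerset, (-1 : R) ^ S.card • bind₁ (shiftBy S) p = 0) :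
    iteratedPderiv l p = 0 := by
  have hterm : ∀ S ∈ J.powerset,
      iteratedPderiv (l.map Sum.inr) ((-1 : R) ^ S.card • bind₁ (shiftBy S) p)
        = if S = J then (-1 : R) ^ J.card • bind₁ (shiftBy J) (iteratedPderiv l p) else 0 := by
    intro S hS
    rw [map_smul, iteratedPderiv_map_inr_bind₁_shiftBy]
    by_cases hSJ : S = J
    · subst hSJ; simp [hl]
    · have : ¬ ∀ j ∈ l, j ∈ S := fun h =>
        hSJ ((Finset.mem_powerset.mp hS).antisymm fun j hj => h j ((hl j).mpr hj))
      simp [hSJ, this]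
  have := congrArg (iteratedPderiv (l.map Sum.inr)) hp
  rw [map_sum, Finset.sum_congr rfl hterm, Finset.sum_ite_eq', map_zero,
    if_pos (Finset.mem_powerset_self J), (isUnit_neg_one.pow _).smul_eq_zero] at this
  exact bind₁_shiftBy_injective J (this.trans (map_zero _).symm)

end MvPolynomial

theorem Finset.sum_powerset_neg_one_pow_card_smul_eq_zero {ι R M : Type*} [DecidableEq ι]
    [Ring R] [AddCommGroup M] [Module R M] {J : Finset ι} {j : ι} (hj : j ∈ J)
    (F : Finset ι → M) (hF : ∀ S ⊆ J.erase j, F (insert j S) = F S) :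
    ∑ S ∈ J.powerset, (-1 : R) ^ S.card • F S = 0 := by
  rw [← Finset.insert_erase hj, Finset.sum_powerset_insert (Finset.notMem_erase j J),
    ← Finset.sum_add_distrib]
  refine Finset.sum_eq_zero fun S hS => ?_
  have hjS : j ∉ S := fun h => Finset.notMem_erase j J (Finset.mem_powerset.mp hS h)
  rw [Finset.card_insert_of_notMem hjS, hF S (Finset.mem_powerset.mp hS), pow_succ, mul_neg_one,
    neg_smul, add_neg_cancel]

section Polytope

variable {n r : ℕ} (u : Fin r → Fin n → ℤ) (c : Fin r → ℤ)

theorem continuous_pairR (v : Fin n → ℤ) : Continuous fun m : Fin n → ℝ => pairR m v :=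
  continuous_id.dotProduct continuous_const

theorem pairR_homothety (m₀ m : Fin n → ℝ) (a : ℝ) (v : Fin n → ℤ) :
    pairR (AffineMap.homothety m₀ a m) v = a * pairR m v + (1 - a) * pairR m₀ v := by
  simp only [pairR, AffineMap.homothety_apply, vsub_eq_sub, vadd_eq_add, Pi.add_apply,
    Pi.smul_apply, Pi.sub_apply, smul_eq_mul, Finset.mul_sum, ← Finset.sum_add_distrib]
  exact Finset.sum_congr rfl fun i _ => by ring

theorem isClosed_Ph (h : Fin r → ℝ) : IsClosed (Ph u c h) := by
  simp only [Ph, Set.ofPred_forall]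
  exact isClosed_iInter fun j => isClosed_le continuous_const
    (((continuous_pairR (u j)).add continuous_const).add continuous_const)

theorem Ph_mono {h h' : Fin r → ℝ} (hh : h ≤ h') : Ph u c h ⊆ Ph u c h' :=
  fun _ hm j => (hm j).trans (by linarith [hh j])

theorem isCompact_Pset (hlat : ∃ S : Finset (Fin n → ℤ), Pset u c = convexHull ℝ (castZ '' ↑S)) :
    IsCompact (Pset u c) := by
  obtain ⟨S, hS⟩ := hlat
  exact hS ▸ (S.finite_toSet.image castZ).isCompact_convexHull ℝ

theorem slack_pos_of_mem_interior {m₀ : Fin n → ℝ} (hm₀ : m₀ ∈ interior (Pset u c)) {j : Fin r}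
    (hu : u j ≠ 0) : 0 < pairR m₀ (u j) + c j := by
  have hv : 0 < pairR (castZ (u j)) (u j) := by
    obtain ⟨i, hi⟩ := Function.ne_iff.mp hu
    exact Finset.sum_pos' (fun i _ => mul_self_nonneg _)
      ⟨i, Finset.mem_univ i, mul_self_pos.mpr (Int.cast_ne_zero.mpr hi)⟩
  have hnear : ∀ᶠ τ in nhds (0 : ℝ), m₀ - τ • castZ (u j) ∈ Pset u c :=
    ((continuous_const.sub (continuous_id.smul continuous_const)).tendsto' 0 m₀
      (by simp)).eventually (mem_interior_iff_mem_nhds.mp hm₀)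
  obtain ⟨τ, hτP, hτ⟩ := ((hnear.filter_mono nhdsWithin_le_nhds).and
    (self_mem_nhdsWithin : Set.Ioi (0 : ℝ) ∈ nhdsWithin 0 (Set.Ioi 0))).exists
  have hslack := hτP j
  simp only [pairR, Pi.sub_apply, Pi.smul_apply, smul_eq_mul, sub_mul, Finset.sum_sub_distrib,
    mul_assoc, ← Finset.mul_sum] at hslack
  unfold pairR at hv ⊢
  nlinarith [mul_pos (Set.mem_Ioi.mp hτ) hv]

theorem Ph_const_subset_homothety_image {m₀ : Fin n → ℝ} {a ε : ℝ} (ha : 1 ≤ a)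
    (hm₀ : ∀ j, ε ≤ (a - 1) * (pairR m₀ (u j) + c j)) :
    Ph u c (fun _ => ε) ⊆ AffineMap.homothety m₀ a '' Pset u c := by
  intro m hm
  have ha0 : a ≠ 0 := by positivity
  refine ⟨AffineMap.homothety m₀ a⁻¹ m, fun j => ?_, ?_⟩
  · have hm' : 0 ≤ pairR m (u j) + c j + ε := hm j
    have hslack : pairR (AffineMap.homothety m₀ a⁻¹ m) (u j) + c j
        = a⁻¹ * ((pairR m (u j) + c j) + (a - 1) * (pairR m₀ (u j) + c j)) := by
      rw [pairR_homothety]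
      field_simp
      ring
    rw [hslack]
    exact mul_nonneg (by positivity) (by linarith [hm₀ j])
  · rw [← AffineMap.homothety_mul_apply, mul_inv_cancel₀ ha0, AffineMap.homothety_one,
      AffineMap.id_apply]

theorem isCompact_Ph_const
    (hlat : ∃ S : Finset (Fin n → ℤ), Pset u c = convexHull ℝ (castZ '' ↑S))
    (hfull : (interior (Pset u c)).Nonempty) (hprim : ∀ j, Finset.univ.gcd (u j) = 1)
    (ε : ℝ) : IsCompact (Ph u c fun _ => ε) := by
  obtain ⟨m₀, hm₀⟩ := hfull
  have hslack : ∀ j, 0 < pairR m₀ (u j) + c j := fun j =>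
    slack_pos_of_mem_interior u c hm₀ fun hu =>
      zero_ne_one ((Finset.gcd_eq_zero_iff.mpr fun i _ => congrFun hu i).symm.trans (hprim j))
  obtain ⟨a, ha, haε⟩ : ∃ a : ℝ, 1 ≤ a ∧ ∀ j, ε ≤ (a - 1) * (pairR m₀ (u j) + c j) :=
    ((Filter.eventually_ge_atTop 1).and (Filter.eventually_all.mpr fun j =>
      ((Filter.tendsto_atTop_add_const_right _ (-1) Filter.tendsto_id).atTop_mul_const
        (hslack j)).eventually_ge_atTop ε)).exists
  exact ((isCompact_Pset u c hlat).image (AffineMap.homothety_continuous m₀ a)).of_isClosed_subset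
    (isClosed_Ph u c _)
    (Ph_const_subset_homothety_image u c ha (by simpa [sub_eq_add_neg] using haε))

variable (J : Finset (Fin r))

/-- A thickening of the face `⋂_{j ∈ J} F_j`, measured in the slacks `⟨m, u_j⟩ + c_j`. -/
def nearFaces (δ : ℝ) : Set (Fin n → ℝ) :=
  {m | (∀ j, -δ ≤ pairR m (u j) + c j) ∧ ∀ j ∈ J, pairR m (u j) + c j ≤ δ}

theorem isClosed_nearFaces (δ : ℝ) : IsClosed (nearFaces u c J δ) := by
  simp only [nearFaces, Set.ofPred_and, Set.ofPred_forall]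
  exact (isClosed_iInter fun j => isClosed_le continuous_const
    ((continuous_pairR (u j)).add continuous_const)).inter
    (isClosed_iInter fun j => isClosed_iInter fun _ =>
      isClosed_le ((continuous_pairR (u j)).add continuous_const) continuous_const)

theorem nearFaces_subset_Ph (δ : ℝ) : nearFaces u c J δ ⊆ Ph u c fun _ => δ :=
  fun _ hm j => by linarith [hm.1 j]

theorem nearFaces_mono {δ δ' : ℝ} (h : δ ≤ δ') : nearFaces u c J δ ⊆ nearFaces u c J δ' :=
  fun _ hm => ⟨fun j => by linarith [hm.1 j], fun j hj => by linarith [hm.2 j hj]⟩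

theorem iInter_nearFaces_subset :
    ⋂ k : ℕ, nearFaces u c J (1 / (k + 1)) ⊆ ⋂ j ∈ J, Fface u c j := by
  intro m hm
  have hm := Set.mem_iInter.mp hm
  have hP : m ∈ Pset u c := fun j => by
    have := ge_of_tendsto' tendsto_one_div_add_atTop_nhds_zero_nat fun k =>
      (by linarith [(hm k).1 j] : -(pairR m (u j) + c j) ≤ 1 / ((k : ℝ) + 1))
    linarith
  refine Set.mem_iInter₂.mpr fun j hj => ⟨hP, le_antisymm ?_ (hP j)⟩
  exact ge_of_tendsto' tendsto_one_div_add_atTop_nhds_zero_nat fun k => (hm k).2 j hj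

theorem exists_nearFaces_eq_empty (hK : IsCompact (Ph u c fun _ => 1))
    (hJ : (⋂ j ∈ J, Fface u c j) = ∅) : ∃ δ, 0 < δ ∧ δ ≤ 1 ∧ nearFaces u c J δ = ∅ := by
  by_contra! hne
  have hseq : (⋂ k : ℕ, nearFaces u c J (1 / (k + 1))).Nonempty := by
    refine IsCompact.nonempty_iInter_of_sequence_nonempty_isCompact_isClosed _
      (fun k => nearFaces_mono u c J ?_) (fun k => hne (1 / ((k : ℝ) + 1)) ?_ ?_) ?_
      (fun k => isClosed_nearFaces u c J _)
    · push_cast; gcongr; linarith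
    · positivity
    · exact div_le_one_of_le₀ (by linarith [k.cast_nonneg (α := ℝ)]) (by positivity)
    · exact hK.of_isClosed_subset (isClosed_nearFaces u c J _)
        ((nearFaces_subset_Ph u c J _).trans (by norm_num))
  simpa [hJ] using hseq.mono (iInter_nearFaces_subset u c J)

theorem sum_powerset_indicator_Ph_shift_eq_zero {δ : ℝ} (hδ : nearFaces u c J δ = ∅)
    {h t : Fin r → ℝ} (hh : ∀ j, |h j| ≤ δ / 2) (ht : ∀ j, 0 ≤ t j ∧ t j ≤ δ / 2)
    (g : (Fin n → ℝ) → ℝ) (m : Fin n → ℝ) :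
    ∑ S ∈ J.powerset, (-1 : ℝ) ^ S.card •
      (Ph u c fun j => h j + if j ∈ S then t j else 0).indicator g m = 0 := by
  by_cases hP : ∀ j, -δ ≤ pairR m (u j) + c j
  · obtain ⟨j, hj, hfar⟩ : ∃ j ∈ J, δ < pairR m (u j) + c j := by
      by_contra! hclose
      exact (hδ ▸ ⟨hP, hclose⟩ : m ∈ (∅ : Set (Fin n → ℝ)))
    refine Finset.sum_powerset_neg_one_pow_card_smul_eq_zero hj _ fun S _ => ?_
    refine Set.indicator_eq_indicator (forall_congr' fun i => ?_) rfl
    dsimp only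
    rcases eq_or_ne i j with rfl | hij
    · have := abs_le.mp (hh i)
      constructor <;> intro <;> split_ifs <;> linarith [ht i]
    · rw [if_congr (Finset.mem_insert.trans (or_iff_right hij)) rfl rfl]
  · obtain ⟨i, hi⟩ := not_forall.mp hP
    refine Finset.sum_eq_zero fun S _ => ?_
    rw [Set.indicator_of_notMem, smul_zero]
    intro hm
    have hmi : 0 ≤ pairR m (u i) + c i + (h i + if i ∈ S then t i else 0) := hm i
    have := abs_le.mp (hh i)
    split_ifs at hmi <;> linarith [ht i]

theorem sum_powerset_setIntegral_Ph_shift_eq_zero (hK : IsCompact (Ph u c fun _ => 1)) {δ : ℝ}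
    (hδ1 : δ ≤ 1) (hδ : nearFaces u c J δ = ∅) {h t : Fin r → ℝ} (hh : ∀ j, |h j| ≤ δ / 2)
    (ht : ∀ j, 0 ≤ t j ∧ t j ≤ δ / 2) {g : (Fin n → ℝ) → ℝ} (hg : Continuous g) :
    ∑ S ∈ J.powerset, (-1 : ℝ) ^ S.card •
      ∫ m in Ph u c (fun j => h j + if j ∈ S then t j else 0), g m = 0 := by
  have hint : ∀ S : Finset (Fin r),
      Integrable fun m => (-1 : ℝ) ^ S.card •
        (Ph u c fun j => h j + if j ∈ S then t j else 0).indicator g m := by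
    intro S
    have hsub : (Ph u c fun j => h j + if j ∈ S then t j else 0) ⊆ Ph u c fun _ => 1 :=
      Ph_mono u c fun j => by
        have := abs_le.mp (hh j)
        split_ifs <;> linarith [ht j]
    have hcpt := hK.of_isClosed_subset (isClosed_Ph u c _) hsub
    exact ((hg.continuousOn.integrableOn_compact (μ := volume) hcpt).integrable_indicator
      (isClosed_Ph u c _).measurableSet).smul ((-1 : ℝ) ^ S.card)
  calc ∑ S ∈ J.powerset, (-1 : ℝ) ^ S.card •
        ∫ m in Ph u c (fun j => h j + if j ∈ S then t j else 0), g m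
      = ∫ m, ∑ S ∈ J.powerset, (-1 : ℝ) ^ S.card •
          (Ph u c fun j => h j + if j ∈ S then t j else 0).indicator g m := by
        rw [integral_finsetSum _ fun S _ => hint S]
        refine Finset.sum_congr rfl fun S _ => ?_
        rw [integral_smul, integral_indicator (isClosed_Ph u c _).measurableSet]
    _ = 0 := by
        simp only [sum_powerset_indicator_Ph_shift_eq_zero u c J hδ hh ht, integral_zero]

end Polytope

theorem sum_powerset_bind₁_shiftBy_eq_zero {n r : ℕ} {u : Fin r → Fin n → ℤ} {c : Fin r → ℤ}
    (hK : IsCompact (Ph u c fun _ => 1)) {J : Finset (Fin r)}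
    (hJ : (⋂ j ∈ J, Fface u c j) = ∅) {f : MvPolynomial (Fin n) ℝ} {q : MvPolynomial (Fin r) ℝ}
    (hq : ∀ᶠ h in nhds (0 : Fin r → ℝ),
      MvPolynomial.eval h q = ∫ m in Ph u c h, MvPolynomial.eval m f ∂volume) :
    ∑ S ∈ J.powerset, (-1 : ℝ) ^ S.card • MvPolynomial.bind₁ (MvPolynomial.shiftBy S) q = 0 := by
  obtain ⟨δ, hδ0, hδ1, hδ⟩ := exists_nearFaces_eq_empty u c J hK hJ
  obtain ⟨δ₁, hδ₁, hq⟩ := Metric.eventually_nhds_iff.mp hq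
  set ε := min δ δ₁ / 2 with hε
  have hε0 : 0 < ε := by positivity
  refine MvPolynomial.funext_set (Sum.elim (fun _ => Set.Ioo (-ε) ε) fun _ => Set.Ioo 0 ε)
    (Sum.forall.mpr ⟨fun _ => Set.Ioo_infinite (by linarith), fun _ => Set.Ioo_infinite hε0⟩)
    fun x hx => ?_
  have hh : ∀ j, |x (Sum.inl j)| < ε := fun j => abs_lt.mpr (hx (Sum.inl j) (Set.mem_univ _))
  have ht : ∀ j, 0 < x (Sum.inr j) ∧ x (Sum.inr j) < ε := fun j => hx (Sum.inr j) (Set.mem_univ _)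
  have hshift : ∀ S : Finset (Fin r), dist
      (fun j => x (Sum.inl j) + if j ∈ S then x (Sum.inr j) else 0) (0 : Fin r → ℝ) < δ₁ := by
    intro S
    refine (dist_pi_lt_iff hδ₁).mpr fun j => ?_
    rw [Pi.zero_apply, Real.dist_eq, sub_zero]
    have := abs_lt.mp (hh j)
    have := ht j
    have : ε ≤ δ₁ / 2 := by rw [hε]; linarith [min_le_right δ δ₁]
    split_ifs <;> rw [abs_lt] <;> constructor <;> linarith
  simp only [map_sum, MvPolynomial.smul_eval, MvPolynomial.eval_bind₁_shiftBy, map_zero,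
    hq (hshift _)]
  have : ε ≤ δ / 2 := by rw [hε]; linarith [min_le_left δ δ₁]
  exact sum_powerset_setIntegral_Ph_shift_eq_zero u c J hK hδ1 hδ
    (fun j => (hh j).le.trans this) (fun j => ⟨(ht j).1.le, (ht j).2.le.trans this⟩)
    (MvPolynomial.continuous_eval f)

theorem stmt12_general (n r : ℕ) (u : Fin r → Fin n → ℤ) (c : Fin r → ℤ)
    (hlat : ∃ S : Finset (Fin n → ℤ), Pset u c = convexHull ℝ (castZ '' ↑S))
    (hfull : (interior (Pset u c)).Nonempty)
    (hprim : ∀ j, Finset.univ.gcd (u j) = 1)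
    (f : MvPolynomial (Fin n) ℝ) (q : MvPolynomial (Fin r) ℝ)
    (hq : ∀ᶠ h in nhds (0 : Fin r → ℝ),
      MvPolynomial.eval h q = ∫ m in Ph u c h, MvPolynomial.eval m f ∂volume)
    (J : Finset (Fin r)) (hJ : (⋂ j ∈ J, Fface u c j) = (∅ : Set (Fin n → ℝ))) :
    pderivMulti (fun j => if j ∈ J then 1 else 0) q = 0 := by
  rw [pderivMulti, MvPolynomial.foldl_iterate_pderiv_indicator]
  exact MvPolynomial.iteratedPderiv_eq_zero_of_sum_shiftBy_eq_zero J (by simp) q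
    (sum_powerset_bind₁_shiftBy_eq_zero (isCompact_Ph_const u c hlat hfull hprim 1) hJ hq)

/-- Let `P` be a full-dimensional simple lattice polytope with facet
presentation `P = {m : ⟨m,uⱼ⟩ + cⱼ ≥ 0}` and facets `F₁,…,F_r`, let `f` be a polynomial on
`ℝ^n` and `q_f` the polynomial agreeing with `h ↦ ∫_{P(h)} f dλ` near `0`.  If the pairwise
distinct indices `j₁,…,j_k` (the finset `J`) correspond to facets with empty intersection,
then the mixed partial derivative `(∂/∂h_{j₁}) ⋯ (∂/∂h_{j_k}) q_f` is the zero polynomial. -/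
theorem stmt12 (n r : ℕ) (u : Fin r → Fin n → ℤ) (c : Fin r → ℤ)
    (hlat : ∃ S : Finset (Fin n → ℤ), Pset u c = convexHull ℝ (castZ '' ↑S))
    (hfull : (interior (Pset u c)).Nonempty)
    (hprim : ∀ j, Finset.univ.gcd (u j) = 1)
    (hfacet : ∀ j, Module.finrank ℝ (affineSpan ℝ (Fface u c j)).direction = n - 1)
    (hinj : Function.Injective (Fface u c))
    (hsimp : ∀ m ∈ Pset u c,
      LinearIndependent ℝ
        (fun j : {j : Fin r // pairR m (u j) + (c j : ℝ) = 0} => castZ (u j.1)))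
    (f : MvPolynomial (Fin n) ℝ) (q : MvPolynomial (Fin r) ℝ)
    (hq : ∀ᶠ h in nhds (0 : Fin r → ℝ),
      MvPolynomial.eval h q = ∫ m in Ph u c h, MvPolynomial.eval m f ∂volume)
    (J : Finset (Fin r)) (hJ : (⋂ j ∈ J, Fface u c j) = (∅ : Set (Fin n → ℝ))) :
    pderivMulti (fun j => if j ∈ J then 1 else 0) q = 0 :=
  stmt12_general n r u c hlat hfull hprim f q hq J hJ
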